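/- arXiv:gr-qc/9912060 — 2 statements merged into one kernel-verified Lean document; each statement's English description precedes it below -/
import Mathlib

section
/- For any algebraic curvature tensor R on a 4-dimensional inner product space, the Lanczos (Gauss–Bonnet) combination R_{iabc}R_j{}^{abc} − 2 R_{iajb}R^{ab} − 2 R_{ia}R_j{}^a + R·R_{ij} − (1/4) g_{ij} (R_{abcd}R^{abcd} − 4 R_{ab}R^{ab} + R²) vanishes identically. -/
/-!
Everything is expanded in the orthonormal basis `b`: each occurrence of `x` and `y` through
`z = ∑ i, ⟪b i, z⟫ • b i`, and each component `R_{ijkl}` is brought, by the antisymmetry in either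
pair of slots and the pair symmetry, to a canonical one with `i < j`, `k < l` and `(i, j) ≤ (k, l)`
lexicographically (or to `0`). The identity is then a polynomial identity in the canonical components
and the coordinates of `x` and `y`.
-/

/-- The Ricci contraction of a quadrilinear map w.r.t. an orthonormal basis `b`. -/
noncomputable def ricciOf {V : Type*} [NormedAddCommGroup V] [InnerProductSpace ℝ V]
    {n : ℕ} (b : OrthonormalBasis (Fin n) ℝ V)
    (R : MultilinearMap ℝ (fun _ : Fin 4 => V) ℝ) (x y : V) : ℝ :=
  ∑ a, R ![b a, x, b a, y]

/-- The scalar curvature of a quadrilinear map w.r.t. an orthonormal basis `b`. -/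
noncomputable def scalarOf {V : Type*} [NormedAddCommGroup V] [InnerProductSpace ℝ V]
    {n : ℕ} (b : OrthonormalBasis (Fin n) ℝ V)
    (R : MultilinearMap ℝ (fun _ : Fin 4 => V) ℝ) : ℝ :=
  ∑ i, ricciOf b R (b i) (b i)

open scoped RealInnerProductSpace

namespace MultilinearMap

section OrthonormalExpansion

variable {ι V : Type*} [Fintype ι] [NormedAddCommGroup V] [InnerProductSpace ℝ V]
  (b : OrthonormalBasis ι ℝ V)

theorem apply_update_eq_sum_inner {κ : Type*} [DecidableEq κ]
    (R : MultilinearMap ℝ (fun _ : κ => V) ℝ) (m : κ → V) (p : κ) (z : V) :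
    R (Function.update m p z) = ∑ i, ⟪b i, z⟫ * R (Function.update m p (b i)) := by
  conv_lhs => rw [← b.sum_repr' z]
  simp [map_update_sum, MultilinearMap.map_update_smul]

variable (R : MultilinearMap ℝ (fun _ : Fin 4 => V) ℝ) (z : V) {u v w : V}

theorem apply_vec_eq_sum_inner_slot₀ : R ![z, u, v, w] = ∑ i, ⟪b i, z⟫ * R ![b i, u, v, w] := by
  have h (y : V) : Function.update ![0, u, v, w] 0 y = ![y, u, v, w] := by
    ext j; fin_cases j <;> rfl
  simpa only [h] using R.apply_update_eq_sum_inner b ![0, u, v, w] 0 z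

theorem apply_vec_eq_sum_inner_slot₁ : R ![u, z, v, w] = ∑ i, ⟪b i, z⟫ * R ![u, b i, v, w] := by
  have h (y : V) : Function.update ![u, 0, v, w] 1 y = ![u, y, v, w] := by
    ext j; fin_cases j <;> rfl
  simpa only [h] using R.apply_update_eq_sum_inner b ![u, 0, v, w] 1 z

theorem apply_vec_eq_sum_inner_slot₂ : R ![u, v, z, w] = ∑ i, ⟪b i, z⟫ * R ![u, v, b i, w] := by
  have h (y : V) : Function.update ![u, v, 0, w] 2 y = ![u, v, y, w] := by
    ext j; fin_cases j <;> rfl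
  simpa only [h] using R.apply_update_eq_sum_inner b ![u, v, 0, w] 2 z

theorem apply_vec_eq_sum_inner_slot₃ : R ![u, v, w, z] = ∑ i, ⟪b i, z⟫ * R ![u, v, w, b i] := by
  have h (y : V) : Function.update ![u, v, w, 0] 3 y = ![u, v, w, y] := by
    ext j; fin_cases j <;> rfl
  simpa only [h] using R.apply_update_eq_sum_inner b ![u, v, w, 0] 3 z

end OrthonormalExpansion

end MultilinearMap

theorem lanczos_identity_dim4_general {V : Type*} [NormedAddCommGroup V] [InnerProductSpace ℝ V]
    (b : OrthonormalBasis (Fin 4) ℝ V)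
    (R : MultilinearMap ℝ (fun _ : Fin 4 => V) ℝ)
    (h1 : ∀ x y z w : V, R ![x, y, z, w] = - R ![y, x, z, w])
    (h2 : ∀ x y z w : V, R ![x, y, z, w] = - R ![x, y, w, z])
    (hpair : ∀ x y z w : V, R ![x, y, z, w] = R ![z, w, x, y]) :
    ∀ x y : V,
      (∑ a, ∑ c, ∑ d, R ![x, b a, b c, b d] * R ![y, b a, b c, b d])
        - 2 * (∑ a, ∑ c, R ![x, b a, y, b c] * ricciOf b R (b a) (b c))
        - 2 * (∑ a, ricciOf b R x (b a) * ricciOf b R y (b a))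
        + scalarOf b R * ricciOf b R x y
        - (1 / 4) * (inner ℝ x y : ℝ) *
            ((∑ a, ∑ c, ∑ d, ∑ e, R ![b a, b c, b d, b e] * R ![b a, b c, b d, b e])
              - 4 * (∑ a, ∑ c, ricciOf b R (b a) (b c) * ricciOf b R (b a) (b c))
              + scalarOf b R ^ 2) = 0 := by
  intro x y
  have diag₁ (u v w : V) : R ![u, u, v, w] = 0 := by linarith [h1 u u v w]
  have diag₂ (u v w : V) : R ![u, v, w, w] = 0 := by linarith [h2 u v w w]
  -- The guards orient each symmetry towards the canonical index order, so that `simp` terminates.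
  have swap₁ (i j k l : Fin 4) (_ : j < i) : R ![b i, b j, b k, b l] = -R ![b j, b i, b k, b l] :=
    h1 _ _ _ _
  have swap₂ (i j k l : Fin 4) (_ : l < k) : R ![b i, b j, b k, b l] = -R ![b i, b j, b l, b k] :=
    h2 _ _ _ _
  have swapPairs (i j k l : Fin 4) (_ : k < i ∨ k = i ∧ l < j) :
      R ![b i, b j, b k, b l] = R ![b k, b l, b i, b j] :=
    hpair _ _ _ _
  rw [← b.sum_inner_mul_inner x y]
  simp only [ricciOf, scalarOf, real_inner_comm _ x, R.apply_vec_eq_sum_inner_slot₀ b x,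
    R.apply_vec_eq_sum_inner_slot₁ b x, R.apply_vec_eq_sum_inner_slot₀ b y,
    R.apply_vec_eq_sum_inner_slot₁ b y, R.apply_vec_eq_sum_inner_slot₂ b y,
    R.apply_vec_eq_sum_inner_slot₃ b y]
  simp only [Fin.sum_univ_four]
  simp only [diag₁, diag₂, swap₁, swap₂, swapPairs, Fin.reduceLT, Fin.reduceEq, true_or, true_and,
    false_or, false_and]
  ring

/-- the Lanczos (Gauss–Bonnet) identity in dimension 4: for every algebraic
curvature tensor `R` on a 4-dimensional inner product space,
`R_{iabc}R_j{}^{abc} − 2R_{iajb}R^{ab} − 2R_{ia}R_j{}^a + R·R_{ij}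
  − (1/4) g_{ij}(R_{abcd}R^{abcd} − 4R_{ab}R^{ab} + R²) = 0`. -/
theorem lanczos_identity_dim4 {V : Type*} [NormedAddCommGroup V] [InnerProductSpace ℝ V]
    (b : OrthonormalBasis (Fin 4) ℝ V)
    (R : MultilinearMap ℝ (fun _ : Fin 4 => V) ℝ)
    (h1 : ∀ x y z w : V, R ![x, y, z, w] = - R ![y, x, z, w])
    (h2 : ∀ x y z w : V, R ![x, y, z, w] = - R ![x, y, w, z])
    (hpair : ∀ x y z w : V, R ![x, y, z, w] = R ![z, w, x, y])
    (hB : ∀ x y z w : V, R ![x, y, z, w] + R ![x, w, y, z] + R ![x, z, w, y] = 0) :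
    ∀ x y : V,
      (∑ a, ∑ c, ∑ d, R ![x, b a, b c, b d] * R ![y, b a, b c, b d])
        - 2 * (∑ a, ∑ c, R ![x, b a, y, b c] * ricciOf b R (b a) (b c))
        - 2 * (∑ a, ricciOf b R x (b a) * ricciOf b R y (b a))
        + scalarOf b R * ricciOf b R x y
        - (1 / 4) * (inner ℝ x y : ℝ) *
            ((∑ a, ∑ c, ∑ d, ∑ e, R ![b a, b c, b d, b e] * R ![b a, b c, b d, b e])
              - 4 * (∑ a, ∑ c, ricciOf b R (b a) (b c) * ricciOf b R (b a) (b c))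
              + scalarOf b R ^ 2) = 0 :=
  lanczos_identity_dim4_general b R h1 h2 hpair
end

section
/- For an algebraic curvature tensor R with zero Ricci contraction on an n-dimensional inner product space, define P^{abcd} := R_m{}^a{}_n{}^b R^{mcnd} and Q^{abcd} := g^{ab} R_{mno}{}^c R^{mnod} and M^{abcd} := g^{ab}g^{cd} R_{mnop}R^{mnop}. Then the tensor T^{abcd} := M^{(abcd)} + 16 P^{a(bcd)} − 4 Q^{(abc)d} − 4 Q^{(a|d|bc)} is totally symmetric in (a,b,c,d). -/
/-!
The three pieces of `T` are separately totally symmetric. `M^{(abcd)}` is a full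
symmetrization. Pair symmetry of `R` gives `P_{abcd} = P_{cdab} = P_{badc}`, so the six-term sum
`6 P^{a(bcd)}` is invariant under `a ↔ b` as well as under permutations of `b, c, d`, and the
adjacent transpositions generate `S₄`. Finally `Q_{abcd} = g_{ab} S_{cd}` with `S` symmetric, so
`Q^{(abc)d} + Q^{(a|d|bc)}` is a multiple of the sum of `Q` over all splittings of the four
slots into two pairs.
-/

section
variable {V : Type*} [NormedAddCommGroup V] [InnerProductSpace ℝ V] {n : ℕ}

/-- `P^{abcd} = R_m{}^a{}_n{}^b R^{mcnd}`, contracted with the orthonormal basis `b`. -/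
noncomputable def Ptens (b : OrthonormalBasis (Fin n) ℝ V)
    (R : MultilinearMap ℝ (fun _ : Fin 4 => V) ℝ) (x y z w : V) : ℝ :=
  ∑ m, ∑ o, R ![b m, x, b o, y] * R ![b m, z, b o, w]

/-- `Q^{abcd} = g^{ab} R_{mno}{}^c R^{mnod}`. -/
noncomputable def Qtens (b : OrthonormalBasis (Fin n) ℝ V)
    (R : MultilinearMap ℝ (fun _ : Fin 4 => V) ℝ) (x y z w : V) : ℝ :=
  (inner ℝ x y : ℝ) * ∑ m, ∑ o, ∑ p, R ![b m, b o, b p, z] * R ![b m, b o, b p, w]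

/-- `M^{abcd} = g^{ab} g^{cd} R_{mnop}R^{mnop}`. -/
noncomputable def Mtens (b : OrthonormalBasis (Fin n) ℝ V)
    (R : MultilinearMap ℝ (fun _ : Fin 4 => V) ℝ) (x y z w : V) : ℝ :=
  (inner ℝ x y : ℝ) * (inner ℝ z w : ℝ) *
    ∑ m, ∑ o, ∑ p, ∑ q, R ![b m, b o, b p, b q] * R ![b m, b o, b p, b q]

/-- The candidate totally symmetric tensor
`T^{abcd} = M^{(abcd)} + 16 P^{a(bcd)} − 4 Q^{(abc)d} − 4 Q^{(a|d|bc)}`,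
round brackets denoting symmetrization over the enclosed indices. -/
noncomputable def Ttens (b : OrthonormalBasis (Fin n) ℝ V)
    (R : MultilinearMap ℝ (fun _ : Fin 4 => V) ℝ) (v : Fin 4 → V) : ℝ :=
  ((1 : ℝ) / 24) * ∑ σ : Equiv.Perm (Fin 4),
      Mtens b R (v (σ 0)) (v (σ 1)) (v (σ 2)) (v (σ 3))
    + 16 * (((1 : ℝ) / 6) * ∑ τ : Equiv.Perm (Fin 3),
      Ptens b R (v 0) (![v 1, v 2, v 3] (τ 0)) (![v 1, v 2, v 3] (τ 1)) (![v 1, v 2, v 3] (τ 2)))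
    - 4 * (((1 : ℝ) / 6) * ∑ τ : Equiv.Perm (Fin 3),
      Qtens b R (![v 0, v 1, v 2] (τ 0)) (![v 0, v 1, v 2] (τ 1)) (![v 0, v 1, v 2] (τ 2)) (v 3))
    - 4 * (((1 : ℝ) / 6) * ∑ τ : Equiv.Perm (Fin 3),
      Qtens b R (![v 0, v 1, v 2] (τ 0)) (v 3) (![v 0, v 1, v 2] (τ 1)) (![v 0, v 1, v 2] (τ 2)))

open Equiv

theorem Equiv.Perm.sum_fin_three {M : Type*} [AddCommMonoid M] (f : Perm (Fin 3) → M) :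
    ∑ τ, f τ = f 1 + f (swap 1 2) + f (swap 0 1) + f (swap 0 1 * swap 1 2)
      + f (swap 1 2 * swap 0 1) + f (swap 0 2) := by
  have huniv : (Finset.univ : Finset (Perm (Fin 3))) =
      {1, swap 1 2, swap 0 1, swap 0 1 * swap 1 2, swap 1 2 * swap 0 1, swap 0 2} := by decide
  rw [huniv]
  simp +decide [add_assoc]

theorem comp_perm_eq_of_comp_swap_castSucc_succ {α β : Type*} {k : ℕ}
    (F : (Fin (k + 1) → α) → β)
    (hF : ∀ (i : Fin k) (v : Fin (k + 1) → α), F (v ∘ swap i.castSucc i.succ) = F v)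
    (σ : Perm (Fin (k + 1))) (v : Fin (k + 1) → α) : F (v ∘ σ) = F v := by
  have hσ : σ ∈ Submonoid.closure (Set.range fun i : Fin k ↦ swap i.castSucc i.succ) := by
    rw [Perm.mclosure_swap_castSucc_succ]; trivial
  induction hσ using Submonoid.closure_induction generalizing v with
  | mem _ h => obtain ⟨i, rfl⟩ := h; exact hF i v
  | one => rfl
  | mul σ τ _ _ hσ hτ => rw [Perm.coe_mul, ← Function.comp_assoc, hτ, hσ]

theorem apply_perm_eq_of_adjacent_swaps {α β : Type*} (f : α → α → α → α → β)
    (h01 : ∀ x y z w, f y x z w = f x y z w) (h12 : ∀ x y z w, f x z y w = f x y z w)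
    (h23 : ∀ x y z w, f x y w z = f x y z w) (σ : Perm (Fin 4)) (v : Fin 4 → α) :
    f (v (σ 0)) (v (σ 1)) (v (σ 2)) (v (σ 3)) = f (v 0) (v 1) (v 2) (v 3) := by
  refine comp_perm_eq_of_comp_swap_castSucc_succ (fun v ↦ f (v 0) (v 1) (v 2) (v 3))
    (fun i v ↦ ?_) σ v
  fin_cases i
  exacts [h01 .., h12 .., h23 ..]

section

variable (b : OrthonormalBasis (Fin n) ℝ V) (R : MultilinearMap ℝ (fun _ : Fin 4 => V) ℝ)

theorem Ptens_comm (x y z w : V) : Ptens b R x y z w = Ptens b R z w x y :=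
  Finset.sum_congr rfl fun _ _ => Finset.sum_congr rfl fun _ _ => mul_comm _ _

theorem Ptens_swap_swap (hpair : ∀ x y z w : V, R ![x, y, z, w] = R ![z, w, x, y])
    (x y z w : V) : Ptens b R x y z w = Ptens b R y x w z := by
  unfold Ptens
  rw [Finset.sum_comm]
  simp only [hpair (b _) x, hpair (b _) z]

/-- Together with `Ptens_comm` and `Ptens_swap_swap` this lists all nontrivial symmetries of `P`,
so that `simp` can rewrite each `Ptens` term to the least element of its orbit. -/
theorem Ptens_rev (hpair : ∀ x y z w : V, R ![x, y, z, w] = R ![z, w, x, y])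
    (x y z w : V) : Ptens b R x y z w = Ptens b R w z y x := by
  rw [Ptens_comm, Ptens_swap_swap b R hpair]

theorem Qtens_comm_left (x y z w : V) : Qtens b R x y z w = Qtens b R y x z w := by
  rw [Qtens, Qtens, real_inner_comm]

theorem Qtens_comm_right (x y z w : V) : Qtens b R x y z w = Qtens b R x y w z := by
  simp only [Qtens, mul_comm (R ![_, _, _, z])]

/-- `6 P^{a(bcd)}`. -/
noncomputable def PtensSymm (x y z w : V) : ℝ :=
  Ptens b R x y z w + Ptens b R x y w z + Ptens b R x z y w + Ptens b R x z w y
    + Ptens b R x w y z + Ptens b R x w z y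

/-- The sum of `Q` over the six ordered splittings of the slots into two pairs; it equals
`3 (Q^{(abc)d} + Q^{(a|d|bc)})`. -/
noncomputable def QtensPairings (x y z w : V) : ℝ :=
  Qtens b R x y z w + Qtens b R x z y w + Qtens b R x w y z
    + Qtens b R y z x w + Qtens b R y w x z + Qtens b R z w x y

theorem Ttens_eq (v : Fin 4 → V) :
    Ttens b R v = (1 / 24) * ∑ σ : Perm (Fin 4), Mtens b R (v (σ 0)) (v (σ 1)) (v (σ 2)) (v (σ 3))
      + 8 / 3 * PtensSymm b R (v 0) (v 1) (v 2) (v 3)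
      - 4 / 3 * QtensPairings b R (v 0) (v 1) (v 2) (v 3) := by
  simp only [Ttens, PtensSymm, QtensPairings, Perm.sum_fin_three, Perm.coe_one, id_eq, Perm.coe_mul,
    Function.comp_apply, swap_apply_left, swap_apply_right, swap_apply_of_ne_of_ne, ne_eq,
    Fin.reduceEq, not_false_eq_true, Matrix.cons_val_zero, Matrix.cons_val_one, Matrix.cons_val]
  simp only [Qtens_comm_left b R, Qtens_comm_right b R]
  ring

theorem PtensSymm_comm_left (hpair : ∀ x y z w : V, R ![x, y, z, w] = R ![z, w, x, y])
    (x y z w : V) : PtensSymm b R y x z w = PtensSymm b R x y z w := by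
  simp only [PtensSymm, Ptens_comm b R, Ptens_swap_swap b R hpair, Ptens_rev b R hpair]
  ring

theorem PtensSymm_perm (hpair : ∀ x y z w : V, R ![x, y, z, w] = R ![z, w, x, y])
    (σ : Perm (Fin 4)) (v : Fin 4 → V) :
    PtensSymm b R (v (σ 0)) (v (σ 1)) (v (σ 2)) (v (σ 3)) =
      PtensSymm b R (v 0) (v 1) (v 2) (v 3) :=
  apply_perm_eq_of_adjacent_swaps _ (PtensSymm_comm_left b R hpair)
    (fun _ _ _ _ ↦ by simp only [PtensSymm]; ring) (fun _ _ _ _ ↦ by simp only [PtensSymm]; ring)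
    σ v

theorem QtensPairings_perm (σ : Perm (Fin 4)) (v : Fin 4 → V) :
    QtensPairings b R (v (σ 0)) (v (σ 1)) (v (σ 2)) (v (σ 3)) =
      QtensPairings b R (v 0) (v 1) (v 2) (v 3) := by
  refine apply_perm_eq_of_adjacent_swaps _ ?_ ?_ ?_ σ v <;> intro x y z w <;>
    simp only [QtensPairings, Qtens_comm_left b R, Qtens_comm_right b R] <;> ring

end

theorem Ttens_totally_symmetric_general (b : OrthonormalBasis (Fin n) ℝ V)
    (R : MultilinearMap ℝ (fun _ : Fin 4 => V) ℝ)
    (hpair : ∀ x y z w : V, R ![x, y, z, w] = R ![z, w, x, y]) :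
    ∀ (σ : Equiv.Perm (Fin 4)) (v : Fin 4 → V), Ttens b R (v ∘ σ) = Ttens b R v := by
  intro σ v
  have hM : ∑ τ : Perm (Fin 4), Mtens b R (v (σ (τ 0))) (v (σ (τ 1))) (v (σ (τ 2))) (v (σ (τ 3)))
      = ∑ τ : Perm (Fin 4), Mtens b R (v (τ 0)) (v (τ 1)) (v (τ 2)) (v (τ 3)) :=
    Equiv.sum_comp (Equiv.mulLeft σ) fun τ : Perm (Fin 4) ↦
      Mtens b R (v (τ 0)) (v (τ 1)) (v (τ 2)) (v (τ 3))
  simp only [Ttens_eq, Function.comp_apply, hM, PtensSymm_perm b R hpair, QtensPairings_perm]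

/-- for a Ricci-flat algebraic curvature tensor `R` on an `n`-dimensional inner
product space, the tensor `T^{abcd} = M^{(abcd)} + 16P^{a(bcd)} − 4Q^{(abc)d} − 4Q^{(a|d|bc)}`
is totally symmetric in `(a,b,c,d)`. -/
theorem Ttens_totally_symmetric (b : OrthonormalBasis (Fin n) ℝ V)
    (R : MultilinearMap ℝ (fun _ : Fin 4 => V) ℝ)
    (h1 : ∀ x y z w : V, R ![x, y, z, w] = - R ![y, x, z, w])
    (h2 : ∀ x y z w : V, R ![x, y, z, w] = - R ![x, y, w, z])
    (hpair : ∀ x y z w : V, R ![x, y, z, w] = R ![z, w, x, y])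
    (hB : ∀ x y z w : V, R ![x, y, z, w] + R ![x, w, y, z] + R ![x, z, w, y] = 0)
    (hric : ∀ x y : V, ∑ m, R ![b m, x, b m, y] = 0) :
    ∀ (σ : Equiv.Perm (Fin 4)) (v : Fin 4 → V), Ttens b R (v ∘ σ) = Ttens b R v :=
  Ttens_totally_symmetric_general b R hpair

end
end
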